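/- arXiv:0910.5016 — 2 statements merged into one kernel-verified Lean document; each statement's English description precedes it below -/
import Mathlib

section
/- Let R be a commutative ring with an automorphism σ, let s ≥ 1 be an integer, and let A, D, C be ideals of R satisfying A·C ⊆ D·σ(D)···σ^{s-1}(D). Define T_0 = R, T_n = A·σ^n(C) for 1 ≤ n ≤ s, and T_n = A·σ^s(D)·σ^{s+1}(D)···σ^{n-1}(D)·σ^n(C) for n ≥ s. Then T_n · σ^n(T_m) ⊆ T_{n+m} for all n, m ≥ 0. -/
/-!
Write `D[a, b)` for `σᵃ(D)···σ^{b-1}(D)`. For `n, m ≥ 1` the product `T n · σⁿ(T m)` is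
`A · D[s, n) · σⁿ(A·C) · D[n + s, n + m) · σ^{n+m}(C)`, and the hypothesis gives
`σⁿ(A·C) ⊆ D[n, n + s)`. The three index intervals `[s, n)`, `[n, n + s)`, `[n + s, n + m)`
cover `[s, n + m)`, and a product of ideals only shrinks when factors are added, so the middle
part lies in `D[s, n + m)`.
-/

namespace Ideal

variable {R : Type*} [CommRing R]

theorem prod_le_prod_of_subset {ι : Type*} (f : ι → Ideal R) {S T : Finset ι} (h : S ⊆ T) :
    ∏ i ∈ T, f i ≤ ∏ i ∈ S, f i :=
  Finset.prod_le_prod_of_subset_of_le_one' h fun _ _ _ => one_eq_top (R := R) ▸ le_top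

theorem prod_mul_prod_le_prod_of_subset_union {ι : Type*} [DecidableEq ι] (f : ι → Ideal R)
    {S S₁ S₂ : Finset ι} (h : S ⊆ S₁ ∪ S₂) :
    (∏ i ∈ S₁, f i) * ∏ i ∈ S₂, f i ≤ ∏ i ∈ S, f i :=
  calc (∏ i ∈ S₁, f i) * ∏ i ∈ S₂, f i
      = (∏ i ∈ S₁ ∪ S₂, f i) * ∏ i ∈ S₁ ∩ S₂, f i := Finset.prod_union_inter.symm
    _ ≤ ∏ i ∈ S₁ ∪ S₂, f i := mul_le_left
    _ ≤ ∏ i ∈ S, f i := prod_le_prod_of_subset f h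

theorem map_map_pow (σ : R ≃+* R) (a b : ℕ) (I : Ideal R) :
    map (σ ^ a) (map (σ ^ b) I) = map (σ ^ (a + b)) I := by
  rw [pow_add]
  exact map_map ((σ ^ b : R ≃+* R) : R →+* R) ((σ ^ a : R ≃+* R) : R →+* R)

theorem map_pow_prod_Ico (σ : R ≃+* R) (D : Ideal R) (n a b : ℕ) :
    map (σ ^ n) (∏ i ∈ Finset.Ico a b, map (σ ^ i) D) =
      ∏ i ∈ Finset.Ico (a + n) (b + n), map (σ ^ i) D := by
  rw [← Finset.prod_Ico_add' _ a b n]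
  refine (map_prod (mapHom ((σ ^ n : R ≃+* R) : R →+* R)) _ _).trans ?_
  exact Finset.prod_congr rfl fun i _ => by rw [add_comm i n]; exact map_map_pow σ n i D

end Ideal

open Finset

theorem stmt_7_general (R : Type) [CommRing R] (σ : R ≃+* R) (s : ℕ)
    (A D C : Ideal R)
    (hADC : A * C ≤ ∏ i ∈ Finset.range s, Ideal.map (σ ^ i : R ≃+* R) D)
    (T : ℕ → Ideal R) (hT0 : T 0 = ⊤)
    (hT : ∀ n : ℕ, 1 ≤ n →
      T n = A * (∏ i ∈ Finset.Ico s n, Ideal.map (σ ^ i : R ≃+* R) D) *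
        Ideal.map (σ ^ n : R ≃+* R) C) :
    ∀ n m : ℕ, T n * Ideal.map (σ ^ n : R ≃+* R) (T m) ≤ T (n + m) := by
  intro n m
  rcases n.eq_zero_or_pos with rfl | hn
  · rw [hT0, pow_zero, Ideal.top_mul, zero_add]
    exact (Ideal.map_id (T m)).le
  rcases m.eq_zero_or_pos with rfl | hm
  · simp [hT0, Ideal.map_top]
  set P : Finset ℕ → Ideal R := fun S => ∏ i ∈ S, Ideal.map (σ ^ i) D
  have hshift : Ideal.map (σ ^ n) (A * C) ≤ P (Ico n (s + n)) :=
    calc _ ≤ Ideal.map (σ ^ n) (∏ i ∈ range s, Ideal.map (σ ^ i) D) := Ideal.map_mono hADC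
      _ = P (Ico n (s + n)) := by rw [range_eq_Ico, Ideal.map_pow_prod_Ico, zero_add]
  have hcover : P (Ico s n) * P (Ico n (s + n)) * P (Ico (s + n) (m + n)) ≤ P (Ico s (n + m)) :=
    calc _ ≤ P (Ico s n ∪ Ico n (s + n)) * P (Ico (s + n) (m + n)) := by
          gcongr; exact Ideal.prod_mul_prod_le_prod_of_subset_union _ subset_rfl
      _ ≤ P (Ico s (n + m)) := Ideal.prod_mul_prod_le_prod_of_subset_union _ fun i => by
          simp only [mem_union, mem_Ico]; omega
  rw [hT n hn, hT m hm, hT (n + m) (by omega), Ideal.map_mul, Ideal.map_mul,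
    Ideal.map_pow_prod_Ico, Ideal.map_map_pow]
  calc _ = A * (P (Ico s n) * Ideal.map (σ ^ n) (A * C) * P (Ico (s + n) (m + n))) *
        Ideal.map (σ ^ (n + m)) C := by rw [Ideal.map_mul]; ring
    _ ≤ A * (P (Ico s n) * P (Ico n (s + n)) * P (Ico (s + n) (m + n))) *
        Ideal.map (σ ^ (n + m)) C := by gcongr
    _ ≤ A * P (Ico s (n + m)) * Ideal.map (σ ^ (n + m)) C := by gcongr

/-- Let `R` be a commutative ring with an automorphism `σ`, let `s ≥ 1`, and let
`A, D, C` be ideals of `R` with `A·C ⊆ D·σ(D)···σ^{s-1}(D)`.  Define `T 0 = R` and, for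
`n ≥ 1`, `T n = A · σˢ(D)·σ^{s+1}(D)···σ^{n-1}(D) · σⁿ(C)` (so that `T n = A·σⁿ(C)` for
`1 ≤ n ≤ s`).  Then `T n · σⁿ(T m) ⊆ T (n + m)` for all `n, m ≥ 0`. -/
theorem stmt_7 (R : Type) [CommRing R] (σ : R ≃+* R) (s : ℕ) (hs : 1 ≤ s)
    (A D C : Ideal R)
    (hADC : A * C ≤ ∏ i ∈ Finset.range s, Ideal.map (σ ^ i : R ≃+* R) D)
    (T : ℕ → Ideal R) (hT0 : T 0 = ⊤)
    (hT : ∀ n : ℕ, 1 ≤ n →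
      T n = A * (∏ i ∈ Finset.Ico s n, Ideal.map (σ ^ i : R ≃+* R) D) *
        Ideal.map (σ ^ n : R ≃+* R) C) :
    ∀ n m : ℕ, T n * Ideal.map (σ ^ n : R ≃+* R) (T m) ≤ T (n + m) :=
  stmt_7_general R σ s A D C hADC T hT0 hT
end

section
/- Let X be a Noetherian sober topological space, S ⊆ X an infinite subset whose closure has dimension at most 1, and Ω ⊆ X a closed subset containing infinitely many points of S. Then some irreducible component C of the closure of S satisfies C ⊆ Ω and C ∩ S is infinite. -/
/-!
Cover the closure of `Ω ∩ S` by finitely many closed irreducible sets (Noetherianity); one of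
them, `D`, meets `S` in infinitely many points, and `D ⊆ Ω`. As `D` has two distinct points and
`X` is T0, some point of `D` has a closure properly contained in `D`. Any irreducible `C'` in
`closure S` strictly larger than `D` would then give a chain of length 2 in `closure S`, so `D`
is a component of `closure S`.
-/

open Set Topology TopologicalSpace

section

variable {X Y : Type*} [TopologicalSpace X] [TopologicalSpace Y]

theorem TopologicalSpace.NoetherianSpace.exists_isIrreducible_isClosed_inter_infinite
    [NoetherianSpace X] {A : Set X} (hA : A.Infinite) :
    ∃ D ⊆ closure A, IsIrreducible D ∧ IsClosed D ∧ (D ∩ A).Infinite := by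
  obtain ⟨F, hFfin, hFcl, hFirr, hFcover⟩ :=
    NoetherianSpace.exists_finite_set_isClosed_irreducible (isClosed_closure (s := A))
  have hA_cover : A ⊆ ⋃ D ∈ F, D ∩ A := fun x hx ↦ by
    obtain ⟨D, hDF, hxD⟩ := mem_sUnion.1 (hFcover ▸ subset_closure hx : x ∈ ⋃₀ F)
    exact mem_biUnion hDF ⟨hxD, hx⟩
  by_contra! h
  exact hA ((hFfin.biUnion fun D hD ↦
    h D (hFcover ▸ subset_sUnion_of_mem hD) (hFirr D hD) (hFcl D hD)).subset hA_cover)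

theorem IsClosed.exists_closure_singleton_ssubset [T0Space X] {D : Set X} (hD : IsClosed D)
    (hnt : D.Nontrivial) : ∃ z ∈ D, closure {z} ⊂ D := by
  obtain ⟨x, hx, y, hy, hxy⟩ := hnt
  have hsub : ∀ z ∈ D, closure {z} ⊆ D := fun z hz ↦
    hD.closure_subset_iff.2 (singleton_subset_iff.2 hz)
  by_contra! h
  have hx' := (hsub x hx).eq_of_not_ssubset (h x hx)
  have hy' := (hsub y hy).eq_of_not_ssubset (h y hy)
  exact hxy (inseparable_iff_closure_eq.2 (hx'.trans hy'.symm)).eq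

theorem IsIrreducible.preimage_of_isInducing {t : Set X} (ht : IsIrreducible t) {f : Y → X}
    (hf : IsInducing f) (hrange : t ⊆ range f) : IsIrreducible (f ⁻¹' t) := by
  obtain ⟨x, hx⟩ := ht.nonempty
  obtain ⟨y, rfl⟩ := hrange hx
  refine ⟨⟨y, hx⟩, ?_⟩
  rintro u v hu hv ⟨a, hat, hau⟩ ⟨b, hbt, hbv⟩
  obtain ⟨U, hU, rfl⟩ := hf.isOpen_iff.1 hu
  obtain ⟨V, hV, rfl⟩ := hf.isOpen_iff.1 hv
  obtain ⟨z, hzt, hzU, hzV⟩ := ht.2 U V hU hV ⟨f a, hat, hau⟩ ⟨f b, hbt, hbv⟩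
  obtain ⟨c, rfl⟩ := hrange hzt
  exact ⟨c, hzt, hzU, hzV⟩

def TopologicalSpace.IrreducibleCloseds.comap {f : Y → X} (hf : IsInducing f)
    (t : IrreducibleCloseds X) (ht : (t : Set X) ⊆ range f) : IrreducibleCloseds Y :=
  ⟨f ⁻¹' t, t.isIrreducible.preimage_of_isInducing hf ht, t.isClosed.preimage hf.continuous⟩

theorem TopologicalSpace.IrreducibleCloseds.comap_lt_comap {f : Y → X} (hf : IsInducing f)
    {A B : IrreducibleCloseds X} (hAB : (A : Set X) ⊂ B) (hB : (B : Set X) ⊆ range f) :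
    A.comap hf (hAB.subset.trans hB) < B.comap hf hB := by
  change f ⁻¹' (A : Set X) ⊂ f ⁻¹' B
  exact ⟨preimage_mono hAB.subset,
    fun h ↦ hAB.not_subset ((preimage_subset_preimage_iff hB).1 h)⟩

theorem TopologicalSpace.IrreducibleCloseds.eq_of_ssubset_of_subset_of_topologicalKrullDim_le_one
    {f : Y → X} (hf : IsInducing f) (hdim : topologicalKrullDim Y ≤ 1)
    {A B C : IrreducibleCloseds X}
    (hAB : (A : Set X) ⊂ B) (hBC : (B : Set X) ⊆ C) (hC : (C : Set X) ⊆ range f) :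
    (B : Set X) = C := by
  by_contra hne
  have hB := hBC.trans hC
  rcases Order.krullDim_le_one_iff.1 hdim (B.comap hf hB) with hmin | hmax
  · exact hmin.not_lt (comap_lt_comap hf hAB hB)
  · exact hmax.not_lt (comap_lt_comap hf (hBC.ssubset_of_ne hne) hC)

end

theorem stmt_11_general (X : Type) [TopologicalSpace X] [TopologicalSpace.NoetherianSpace X]
    [T0Space X]
    (S : Set X)
    (hdim : topologicalKrullDim ↥(closure S) ≤ 1)
    (Ω : Set X) (hΩ : IsClosed Ω) (hΩS : (Ω ∩ S).Infinite) :
    ∃ C : Set X, IsIrreducible C ∧ IsClosed C ∧ C ⊆ closure S ∧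
      (∀ C' : Set X, IsIrreducible C' → C' ⊆ closure S → C ⊆ C' → C = C') ∧
      C ⊆ Ω ∧ (C ∩ S).Infinite := by
  obtain ⟨D, hD, hDirr, hDcl, hDinf⟩ :=
    NoetherianSpace.exists_isIrreducible_isClosed_inter_infinite hΩS
  have hDΩ : D ⊆ Ω := hD.trans (hΩ.closure_subset_iff.2 inter_subset_left)
  have hDS : D ⊆ closure S := hD.trans (closure_mono inter_subset_right)
  have hDSinf : (D ∩ S).Infinite := hDinf.mono (inter_subset_inter_right _ inter_subset_right)
  obtain ⟨z, -, hzD⟩ :=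
    hDcl.exists_closure_singleton_ssubset (hDSinf.nontrivial.mono inter_subset_left)
  refine ⟨D, hDirr, hDcl, hDS, fun C' hC' hC'S hDC' ↦ hDC'.antisymm ?_, hDΩ, hDSinf⟩
  have hDC'cl : D = closure C' :=
    IrreducibleCloseds.eq_of_ssubset_of_subset_of_topologicalKrullDim_le_one
      (A := ⟨closure {z}, isIrreducible_singleton.closure, isClosed_closure⟩)
      (B := ⟨D, hDirr, hDcl⟩) (C := ⟨closure C', hC'.closure, isClosed_closure⟩)
      IsInducing.subtypeVal hdim hzD (hDC'.trans subset_closure)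
      (Subtype.range_coe.symm ▸ closure_minimal hC'S isClosed_closure)
  exact subset_closure.trans hDC'cl.ge

/-- Let `X` be a Noetherian sober topological space, `S ⊆ X` an infinite subset whose
closure has dimension at most 1, and `Ω ⊆ X` a closed subset containing infinitely many
points of `S`.  Then some irreducible component `C` of the closure of `S` satisfies
`C ⊆ Ω` and `C ∩ S` is infinite. -/
theorem stmt_11 (X : Type) [TopologicalSpace X] [TopologicalSpace.NoetherianSpace X]
    [QuasiSober X] [T0Space X]
    (S : Set X) (hS : S.Infinite)
    (hdim : topologicalKrullDim ↥(closure S) ≤ 1)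
    (Ω : Set X) (hΩ : IsClosed Ω) (hΩS : (Ω ∩ S).Infinite) :
    ∃ C : Set X, IsIrreducible C ∧ IsClosed C ∧ C ⊆ closure S ∧
      (∀ C' : Set X, IsIrreducible C' → C' ⊆ closure S → C ⊆ C' → C = C') ∧
      C ⊆ Ω ∧ (C ∩ S).Infinite :=
  stmt_11_general X S hdim Ω hΩ hΩS
end
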